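/- arXiv:1508.03566 — 3 statements merged into one kernel-verified Lean document; each statement's English description precedes it below -/
import Mathlib

section
/- For any f with f_min ≤ f ≤ f_max, the seed defined by s_n = n·((q + 1 + f - P + r)/P + 1) for n ∈ {0,…,P-1} satisfies: every f-th order gap g_n^{(f)} equals f·(w + r)/P where w = q + 1 + f - P, and hence 0 ≤ g_n^{(f)} < 1 for all n. -/
/-- First-order gaps of a seed `s` with `P` threads, parameters `q`, `r`, `f`. -/
noncomputable def gap1 (P q f : ℕ) (r : ℝ) (s : ℕ → ℝ) (n : ℕ) : ℝ :=
  if n = 0 then s 0 + (q : ℝ) + r + (f : ℝ) - s (P - 1) else s n - s (n - 1) - 1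

/-- `k`-th order gap: the cyclic sum of `k` consecutive first-order gaps ending at `n`. -/
noncomputable def gapk (P q f : ℕ) (r : ℝ) (s : ℕ → ℝ) (n k : ℕ) : ℝ :=
  ∑ j ∈ Finset.range k, gap1 P q f r s ((n + k * P - k + 1 + j) % P)

/-!
An arithmetic seed `s_m = m (c + 1)` has every first-order gap equal to `c` away from `n = 0`,
and the wrap-around gap at `0` is `c` as well exactly when `P c = q + 1 + f - P + r`.
So all first-order gaps are the constant `(w + r)/P`, and an `f`-th order gap, being a sum of
`f` of them, is `f (w + r)/P`; the bounds are then `w, r ≥ 0` and `f (w + r) < P`.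
-/

theorem gapk_eq_of_gap1_eq_const (P q f : ℕ) (r : ℝ) (s : ℕ → ℝ) (c : ℝ)
    (hs : ∀ m, gap1 P q f r s m = c) (n k : ℕ) :
    gapk P q f r s n k = k * c := by
  simp [gapk, hs]

theorem gap1_arithmetic_seed (P q f : ℕ) (r c : ℝ) (hP : 1 ≤ P)
    (hc : (P : ℝ) * c = q + 1 + f - P + r) (m : ℕ) :
    gap1 P q f r (fun m => (m : ℝ) * (c + 1)) m = c := by
  rcases Nat.eq_zero_or_pos m with rfl | hm
  · simp only [gap1, if_pos, Nat.cast_sub hP]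
    push_cast
    linear_combination -hc
  · simp only [gap1, if_neg hm.ne', Nat.cast_sub hm]
    push_cast
    ring

theorem explicit_seed_gaps_general
    (P q f : ℕ) (r : ℝ)
    (hP : 1 ≤ P) (hr0 : 0 ≤ r)
    (hw : P ≤ q + 1 + f)
    (hfmax : (f : ℝ) * (((q : ℝ) + 1 + (f : ℝ) - (P : ℝ)) + r) < (P : ℝ)) :
    ∀ n < P,
      gapk P q f r
          (fun m => (m : ℝ) * (((q : ℝ) + 1 + (f : ℝ) - (P : ℝ) + r) / (P : ℝ) + 1)) n f
        = (f : ℝ) * (((q : ℝ) + 1 + (f : ℝ) - (P : ℝ)) + r) / (P : ℝ) ∧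
      0 ≤ gapk P q f r
          (fun m => (m : ℝ) * (((q : ℝ) + 1 + (f : ℝ) - (P : ℝ) + r) / (P : ℝ) + 1)) n f ∧
      gapk P q f r
          (fun m => (m : ℝ) * (((q : ℝ) + 1 + (f : ℝ) - (P : ℝ) + r) / (P : ℝ) + 1)) n f < 1 := by
  intro n _
  have hPpos : (0 : ℝ) < P := by exact_mod_cast hP
  have hgap : gapk P q f r
      (fun m => (m : ℝ) * (((q : ℝ) + 1 + (f : ℝ) - (P : ℝ) + r) / (P : ℝ) + 1)) n f
        = (f : ℝ) * (((q : ℝ) + 1 + (f : ℝ) - (P : ℝ)) + r) / (P : ℝ) := by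
    rw [gapk_eq_of_gap1_eq_const _ _ _ _ _ _
      (gap1_arithmetic_seed P q f r _ hP (mul_div_cancel₀ _ hPpos.ne')), mul_div_assoc]
  have hw' : (0 : ℝ) ≤ (q : ℝ) + 1 + (f : ℝ) - (P : ℝ) := by
    rw [sub_nonneg]; exact_mod_cast hw
  refine ⟨hgap, ?_, ?_⟩ <;> rw [hgap]
  · positivity
  · rwa [div_lt_one hPpos]

/-- The explicit seed `s_n = n ((q+1+f-P+r)/P + 1)` realizes a cyclic execution:
every `f`-th order gap equals `f (w + r)/P` with `w = q + 1 + f - P`, hence lies in `[0,1)`. -/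
theorem explicit_seed_gaps
    (P q f : ℕ) (r : ℝ)
    (hP : 1 ≤ P) (hr0 : 0 ≤ r) (hr1 : r < 1)
    (hw : P ≤ q + 1 + f)
    (hfmax : (f : ℝ) * (((q : ℝ) + 1 + (f : ℝ) - (P : ℝ)) + r) < (P : ℝ)) :
    ∀ n < P,
      gapk P q f r
          (fun m => (m : ℝ) * (((q : ℝ) + 1 + (f : ℝ) - (P : ℝ) + r) / (P : ℝ) + 1)) n f
        = (f : ℝ) * (((q : ℝ) + 1 + (f : ℝ) - (P : ℝ)) + r) / (P : ℝ) ∧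
      0 ≤ gapk P q f r
          (fun m => (m : ℝ) * (((q : ℝ) + 1 + (f : ℝ) - (P : ℝ) + r) / (P : ℝ) + 1)) n f ∧
      gapk P q f r
          (fun m => (m : ℝ) * (((q : ℝ) + 1 + (f : ℝ) - (P : ℝ) + r) / (P : ℝ) + 1)) n f < 1 :=
  explicit_seed_gaps_general P q f r hP hr0 hw hfmax
end

section
/- If pw ≥ rc + cw + cc, then the map n ↦ P·(1 + f_min(n))/(q(n) + r(n) + f_min(n) + 1) is nondecreasing in the expansion e(n), where q(n) = ⌊(pw + e)/(rlw_min + e)⌋, r(n) = (pw + e)/(rlw_min + e) − q(n), rlw_min = rc + cw + cc, f_min = max(0, P − q − 1), and e is a nondecreasing function of n. -/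
/-!
Since `(pw + e)/(w + e) = 1 + (pw - w)/(w + e)` with `pw - w ≥ 0`, the ratio `ρ` decreases in `e`,
and so does its floor, while `f_min` increases. The average `P (1 + f)/(ρ + 1 + f)` increases
in `f` and decreases in `ρ`, so it increases in `e`.
-/

theorem antitoneOn_add_div_add {p w : ℝ} (hwp : w ≤ p) :
    AntitoneOn (fun e : ℝ => (p + e) / (w + e)) (Set.Ioi (-w)) := by
  intro x hx y hy hxy
  have hwx : 0 < w + x := neg_lt_iff_pos_add'.mp hx
  have hwy : 0 < w + y := neg_lt_iff_pos_add'.mp hy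
  rw [div_le_div_iff₀ hwy hwx]
  nlinarith

theorem div_add_self_le_div_add_self {a x y : ℝ} (ha : 0 < a) (hx : 0 ≤ x) (hxy : x ≤ y) :
    x / (a + x) ≤ y / (a + y) := by
  rw [div_le_div_iff₀ (by linarith) (by linarith)]
  nlinarith

theorem mul_one_add_div_le_of_le {P ρ ρ' F F' : ℝ} (hP : 0 ≤ P) (hρ' : 0 < ρ') (hρ : ρ' ≤ ρ)
    (hF : 0 ≤ F) (hFF' : F ≤ F') :
    P * (1 + F) / (ρ + 1 + F) ≤ P * (1 + F') / (ρ' + 1 + F') := by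
  calc P * (1 + F) / (ρ + 1 + F) ≤ P * (1 + F) / (ρ' + 1 + F) := by gcongr
    _ = P * ((1 + F) / (ρ' + (1 + F))) := by ring
    _ ≤ P * ((1 + F') / (ρ' + (1 + F'))) :=
      mul_le_mul_of_nonneg_left (div_add_self_le_div_add_self hρ' (by linarith) (by linarith)) hP
    _ = P * (1 + F') / (ρ' + 1 + F') := by ring

theorem avg_threads_map_monotone_general
    (P : ℕ) (pw rc cw cc : ℝ)
    (hrc : 0 < rc) (hcw : 0 < cw) (hcc : 0 < cc)
    (hpw : rc + cw + cc ≤ pw) :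
    AntitoneOn (fun e : ℝ => (pw + e) / (rc + cw + cc + e)) (Set.Ici 0) ∧
    AntitoneOn (fun e : ℝ => ⌊(pw + e) / (rc + cw + cc + e)⌋) (Set.Ici 0) ∧
    MonotoneOn (fun e : ℝ => max 0 ((P : ℤ) - 1 - ⌊(pw + e) / (rc + cw + cc + e)⌋))
      (Set.Ici 0) ∧
    MonotoneOn
      (fun e : ℝ =>
        (P : ℝ) * (1 + (max 0 ((P : ℤ) - 1 - ⌊(pw + e) / (rc + cw + cc + e)⌋) : ℝ)) /
          ((pw + e) / (rc + cw + cc + e) + 1 +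
            (max 0 ((P : ℤ) - 1 - ⌊(pw + e) / (rc + cw + cc + e)⌋) : ℝ)))
      (Set.Ici 0) := by
  have hw : 0 < rc + cw + cc := by positivity
  have hρ : AntitoneOn (fun e : ℝ => (pw + e) / (rc + cw + cc + e)) (Set.Ici 0) :=
    (antitoneOn_add_div_add hpw).mono fun e (he : 0 ≤ e) => show -(rc + cw + cc) < e by linarith
  have hq : AntitoneOn (fun e : ℝ => ⌊(pw + e) / (rc + cw + cc + e)⌋) (Set.Ici 0) :=
    Int.floor_mono.comp_antitoneOn hρ
  have hfmin_of_q : Antitone fun q : ℤ => max 0 ((P : ℤ) - 1 - q) :=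
    fun _ _ h => max_le_max le_rfl (by omega)
  have hfmin : MonotoneOn
      (fun e : ℝ => max 0 ((P : ℤ) - 1 - ⌊(pw + e) / (rc + cw + cc + e)⌋)) (Set.Ici 0) :=
    hfmin_of_q.comp_antitoneOn hq
  refine ⟨hρ, hq, hfmin, fun x hx y hy hxy => ?_⟩
  have hρy : 0 < (pw + y) / (rc + cw + cc + y) := by
    have : (0 : ℝ) ≤ y := hy
    apply div_pos <;> linarith
  exact mul_one_add_div_le_of_le P.cast_nonneg hρy (hρ hx hy hxy) (by positivity)
    (by exact_mod_cast hfmin hx hy hxy)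

/-- Monotonicity of the average-number-of-threads map in the expansion `e`:
with `ρ(e) = (pw + e)/(w + e)` (`w = rc + cw + cc`), `q(e) = ⌊ρ(e)⌋`,
`f_min(e) = max 0 (P - 1 - q(e))`, if `pw ≥ w` then `ρ` is nonincreasing,
`q` is nonincreasing, `f_min` is nondecreasing, and
`e ↦ P (1 + f_min(e)) / (ρ(e) + 1 + f_min(e))` is nondecreasing on `[0, ∞)`. -/
theorem avg_threads_map_monotone
    (P : ℕ) (pw rc cw cc : ℝ)
    (hP : 1 ≤ P) (hrc : 0 < rc) (hcw : 0 < cw) (hcc : 0 < cc)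
    (hpw : rc + cw + cc ≤ pw) :
    AntitoneOn (fun e : ℝ => (pw + e) / (rc + cw + cc + e)) (Set.Ici 0) ∧
    AntitoneOn (fun e : ℝ => ⌊(pw + e) / (rc + cw + cc + e)⌋) (Set.Ici 0) ∧
    MonotoneOn (fun e : ℝ => max 0 ((P : ℤ) - 1 - ⌊(pw + e) / (rc + cw + cc + e)⌋))
      (Set.Ici 0) ∧
    MonotoneOn
      (fun e : ℝ =>
        (P : ℝ) * (1 + (max 0 ((P : ℤ) - 1 - ⌊(pw + e) / (rc + cw + cc + e)⌋) : ℝ)) /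
          ((pw + e) / (rc + cw + cc + e) + 1 +
            (max 0 ((P : ℤ) - 1 - ⌊(pw + e) / (rc + cw + cc + e)⌋) : ℝ)))
      (Set.Ici 0) :=
  avg_threads_map_monotone_general P pw rc cw cc hrc hcw hcc hpw
end

section
/- For a weakly-formed seed with P threads built on a well-formed seed with P−1 threads, all gaps satisfy g_n^{(f)} ≤ g̃_n^{(f)}, where g̃ denotes the gaps of the (P−1)-thread well-formed seed; in particular all f-th order gaps of the extended seed are < 1. -/
noncomputable def unfoldedTime (P q f : ℕ) (r : ℝ) (s : ℕ → ℝ) (i : ℕ) : ℝ :=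
  s (i % P) + (i / P : ℕ) * (q + r + f + 1)

section

variable {P q f i n k : ℕ} {r : ℝ} {s : ℕ → ℝ}

theorem gap1_succ_mod_eq_unfoldedTime_sub (hP : 0 < P) (i : ℕ) :
    gap1 P q f r s ((i + 1) % P) =
      unfoldedTime P q f r s (i + 1) - unfoldedTime P q f r s i - 1 := by
  have hi := Nat.mod_add_div i P
  have hi' := Nat.mod_add_div (i + 1) P
  have hlt := Nat.mod_lt i hP
  unfold unfoldedTime
  by_cases hdvd : P ∣ i + 1
  · have hmod : (i + 1) % P = 0 := Nat.mod_eq_zero_of_dvd hdvd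
    have hdiv := Nat.succ_div_of_dvd hdvd
    have hlast : i % P = P - 1 := by rw [hdiv, Nat.mul_succ] at hi'; omega
    rw [hmod, hlast, hdiv, gap1, if_pos rfl]
    push_cast
    ring
  · have hdiv := Nat.succ_div_of_not_dvd hdvd
    have hmod : (i + 1) % P = i % P + 1 := by rw [hdiv] at hi'; omega
    rw [hmod, hdiv, gap1, if_neg (Nat.succ_ne_zero _), Nat.add_sub_cancel]
    ring

theorem gapk_eq_unfoldedTime_sub (hP : 0 < P) (n k : ℕ) :
    gapk P q f r s n k =
      unfoldedTime P q f r s (n + k * P) - unfoldedTime P q f r s (n + k * P - k) - k := by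
  have hk : k ≤ k * P := Nat.le_mul_of_pos_right k hP
  rw [gapk]
  set m := n + k * P - k
  have hshift : ∀ j, m + 1 + j = m + j + 1 := fun j => by omega
  simp only [hshift, gap1_succ_mod_eq_unfoldedTime_sub hP]
  simp only [add_assoc]
  rw [Finset.sum_sub_distrib, Finset.sum_range_sub (fun j => unfoldedTime P q f r s (m + j)),
    Finset.sum_const, Finset.card_range, nsmul_eq_mul, mul_one, add_zero,
    show m + k = n + k * P by omega]

theorem unfoldedTime_add_mul (hi : i < P) (j : ℕ) :
    unfoldedTime P q f r s (i + j * P) = s i + j * (q + r + f + 1) := by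
  rw [unfoldedTime, Nat.add_mul_mod_self_right, Nat.mod_eq_of_lt hi,
    Nat.add_mul_div_right _ _ (by omega), Nat.div_eq_of_lt hi, zero_add]

theorem gapk_of_le (hkn : k ≤ n) (hn : n < P) :
    gapk P q f r s n k = s n - s (n - k) - k := by
  have hsub : n + k * P - k = (n - k) + k * P := by
    have : k ≤ k * P := Nat.le_mul_of_pos_right k (by omega)
    omega
  rw [gapk_eq_unfoldedTime_sub (by omega), hsub, unfoldedTime_add_mul hn,
    unfoldedTime_add_mul (by omega)]
  ring

theorem gapk_of_lt (hnk : n < k) (hk : k ≤ P) :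
    gapk P q f r s n k = s n - s (P + n - k) - k + (q + r + f + 1) := by
  obtain ⟨m, rfl⟩ : ∃ m, k = m + 1 := ⟨k - 1, by omega⟩
  have hsub : n + (m + 1) * P - (m + 1) = (P + n - (m + 1)) + m * P := by
    rw [add_mul, one_mul]
    omega
  rw [gapk_eq_unfoldedTime_sub (by omega), hsub, unfoldedTime_add_mul (by omega),
    unfoldedTime_add_mul (by omega)]
  push_cast
  ring

theorem gapk_le_gapk_pred_of_lt (hs : MonotoneOn s (Set.Iio P)) (hn : n < P - 1)
    (hk : k ≤ P - 1) : gapk P q f r s n k ≤ gapk (P - 1) q f r s n k := by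
  rcases le_or_gt k n with hkn | hnk
  · rw [gapk_of_le hkn (by omega), gapk_of_le hkn hn]
  · rw [gapk_of_lt hnk (by omega), gapk_of_lt hnk hk]
    have hstart : s (P - 1 + n - k) ≤ s (P + n - k) :=
      hs (Set.mem_Iio.mpr (by omega)) (Set.mem_Iio.mpr (by omega)) (by omega)
    linarith

theorem gapk_last_le_gapk_pred_zero (h0 : 0 ≤ gap1 P q f r s 0) (hk : k ≤ P - 1) :
    gapk P q f r s (P - 1) k ≤ gapk (P - 1) q f r s 0 k := by
  rcases Nat.eq_zero_or_pos k with rfl | hk0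
  · simp [gapk]
  · rw [gapk_of_le hk (by omega), gapk_of_lt hk0 hk, add_zero]
    rw [gap1, if_pos rfl] at h0
    linarith

end

theorem weakly_formed_seed_gaps_le_general
    (P q f : ℕ) (r : ℝ) (s : ℕ → ℝ)
    (hP : 3 ≤ P) (hf : f ≤ P - 1)
    (hmono : StrictMonoOn s (Set.Iio P))
    (hsplit : 0 ≤ gap1 P q f r s (P - 1) ∧ 0 ≤ gap1 P q f r s 0)
    (hwf : ∀ n < P - 1, 0 ≤ gapk (P - 1) q f r s n f ∧ gapk (P - 1) q f r s n f < 1) :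
    (∀ n < P, ∀ k ≤ P - 1,
      gapk P q f r s n k ≤ gapk (P - 1) q f r s (n % (P - 1)) k) ∧
    (∀ n < P, gapk P q f r s n f < 1) := by
  have key : ∀ n < P, ∀ k ≤ P - 1,
      gapk P q f r s n k ≤ gapk (P - 1) q f r s (n % (P - 1)) k := by
    intro n hn k hk
    rcases lt_or_eq_of_le (Nat.le_sub_one_of_lt hn) with hlt | rfl
    · rw [Nat.mod_eq_of_lt hlt]
      exact gapk_le_gapk_pred_of_lt hmono.monotoneOn hlt hk
    · rw [Nat.mod_self]
      exact gapk_last_le_gapk_pred_zero hsplit.2 hk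
  exact ⟨key, fun n hn => (key n hn f hf).trans_lt (hwf _ (Nat.mod_lt _ (by omega))).2⟩

/-- Weakly-formed seed: inserting a new thread (success time `s (P-1)`) into a
well-formed seed with `P-1` threads splits the old wrap-around gap into two
nonnegative parts; then every `k`-th order gap of the extended `P`-thread seed is
at most the corresponding `k`-th order gap of the `P-1`-thread seed, and in
particular all `f`-th order gaps of the extended seed are `< 1`. -/
theorem weakly_formed_seed_gaps_le
    (P q f : ℕ) (r : ℝ) (s : ℕ → ℝ)
    (hP : 3 ≤ P) (hr0 : 0 ≤ r) (hr1 : r < 1) (hf : f ≤ P - 1)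
    (hmono : StrictMonoOn s (Set.Iio P))
    (hins : s (P - 2) + 1 < s (P - 1))
    (hsplit : 0 ≤ gap1 P q f r s (P - 1) ∧ 0 ≤ gap1 P q f r s 0)
    (hwf : ∀ n < P - 1, 0 ≤ gapk (P - 1) q f r s n f ∧ gapk (P - 1) q f r s n f < 1) :
    (∀ n < P, ∀ k ≤ P - 1,
      gapk P q f r s n k ≤ gapk (P - 1) q f r s (n % (P - 1)) k) ∧
    (∀ n < P, gapk P q f r s n f < 1) :=
  weakly_formed_seed_gaps_le_general P q f r s hP hf hmono hsplit hwf
end
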